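/- Perturbation bound for landscape functions. Let m > s ≥ 1, let V, W ∈ ℂ^{m×s} have orthonormal columns, let q_V and q_W be their landscape functions, and let ϑ := ‖VV^* − WW^*‖_2. Then for every integer ℓ ≥ 0, ‖q_V^{(ℓ)} − q_W^{(ℓ)}‖_{L^∞(𝕋)} ≤ ϑ·m^ℓ. -/

import Mathlib

set_option synthInstance.maxHeartbeats 1000000
set_option maxHeartbeats 1000000


open scoped Real BigOperators Matrix
open Matrix

noncomputable section

/-- The steering vector `φ(t) = m^{-1/2} (e^{ikt})_{k ∈ I(m)}`,
where `I(m) = {-(m-1)/2, …, (m-1)/2}` (realized by `k ↦ k - (m-1)/2` for `k : Fin m`). -/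
def steer (m : ℕ) (t : ℝ) : Fin m → ℂ :=
  fun k => (Real.sqrt m : ℂ)⁻¹ *
    Complex.exp (Complex.I * (((((k : ℕ) : ℝ) - ((m : ℝ) - 1) / 2) * t : ℝ) : ℂ))

/-- The landscape function `q_W(t) = 1 - ‖W^* φ(t)‖₂²`. -/
def landscape {m s : ℕ} (W : Matrix (Fin m) (Fin s) ℂ) (t : ℝ) : ℝ :=
  1 - ∑ j, ‖(Wᴴ *ᵥ steer m t) j‖ ^ 2

/-- Spectral norm (ℓ² → ℓ² operator norm) of a complex matrix. -/
def specNorm {d e : ℕ} (M : Matrix (Fin d) (Fin e) ℂ) : ℝ :=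
  ‖LinearMap.toContinuousLinearMap (Matrix.toEuclideanLin M)‖

namespace LandscapeAux

open Complex Finset

/-- The frequency `i(k - (m-1)/2)` attached to index `k`. -/
def freq (m : ℕ) (a : Fin m) : ℂ :=
  Complex.I * ((((a : ℕ) : ℝ) - ((m : ℝ) - 1) / 2 : ℝ) : ℂ)

lemma conj_freq (m : ℕ) (a : Fin m) : (starRingEnd ℂ) (freq m a) = -freq m a := by
  rw [freq, _root_.map_mul, Complex.conj_I, Complex.conj_ofReal]
  ring

lemma steer_eq (m : ℕ) (t : ℝ) (a : Fin m) :
    steer m t a = (Real.sqrt m : ℂ)⁻¹ * Complex.exp (freq m a * t) := by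
  have h : Complex.I * (((((a : ℕ) : ℝ) - ((m : ℝ) - 1) / 2) * t : ℝ) : ℂ)
      = freq m a * t := by
    unfold freq
    push_cast
    ring
  unfold steer
  rw [h]

lemma conj_steer_mul (m : ℕ) (t : ℝ) (a b : Fin m) :
    (starRingEnd ℂ) (steer m t a) * steer m t b
      = ((m : ℂ))⁻¹ * Complex.exp ((freq m b - freq m a) * t) := by
  rw [steer_eq, steer_eq, _root_.map_mul, map_inv₀, Complex.conj_ofReal, ← Complex.exp_conj]
  have h1 : (starRingEnd ℂ) (freq m a * t) = -freq m a * t := by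
    rw [_root_.map_mul, conj_freq, Complex.conj_ofReal]
  rw [h1]
  have h2 : ((Real.sqrt m : ℂ))⁻¹ * ((Real.sqrt m : ℂ))⁻¹ = ((m : ℂ))⁻¹ := by
    rw [← mul_inv]
    congr 1
    rw [← Complex.ofReal_mul, Real.mul_self_sqrt (Nat.cast_nonneg m)]
    norm_cast
  have h3 : Complex.exp (-freq m a * t) * Complex.exp (freq m b * t)
      = Complex.exp ((freq m b - freq m a) * t) := by
    rw [← Complex.exp_add]
    congr 1
    ring
  rw [← h3, ← h2]
  ring

lemma norm_steer (m : ℕ) (t : ℝ) (a : Fin m) :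
    ‖steer m t a‖ = (Real.sqrt m)⁻¹ := by
  rw [steer_eq, norm_mul, norm_inv]
  have hre : (freq m a * t).re = 0 := by
    simp [freq, Complex.mul_re, Complex.mul_im]
  rw [Complex.norm_exp, hre, Real.exp_zero, mul_one]
  rw [Complex.norm_real, Real.norm_eq_abs, _root_.abs_of_nonneg (Real.sqrt_nonneg _)]

lemma norm_freq_le (m : ℕ) (hm : 1 ≤ m) (a : Fin m) :
    ‖freq m a‖ ≤ ((m : ℝ) - 1) / 2 := by
  have h1 : ‖freq m a‖ = |(((a : ℕ) : ℝ) - ((m : ℝ) - 1) / 2)| := by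
    rw [freq, norm_mul, Complex.norm_I,
      Complex.norm_real, Real.norm_eq_abs, one_mul]
  rw [h1, abs_le]
  have ha0 : (0 : ℝ) ≤ ((a : ℕ) : ℝ) := Nat.cast_nonneg _
  have ha1 : ((a : ℕ) : ℝ) + 1 ≤ (m : ℝ) := by
    exact_mod_cast Nat.succ_le_of_lt a.isLt
  constructor <;> nlinarith

/-- The vector `a ↦ (freq a)^p φ_a(t)`. -/
def vvec (m : ℕ) (p : ℕ) (t : ℝ) : Fin m → ℂ := fun a => freq m a ^ p * steer m t a

lemma conj_vvec (m p : ℕ) (t : ℝ) (a : Fin m) :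
    (starRingEnd ℂ) (vvec m p t a) = (-freq m a) ^ p * (starRingEnd ℂ) (steer m t a) := by
  rw [vvec, _root_.map_mul, map_pow, conj_freq]

lemma norm_vvec_le (m : ℕ) (hm : 1 ≤ m) (p : ℕ) (t : ℝ) :
    ‖(WithLp.equiv 2 (Fin m → ℂ)).symm (vvec m p t)‖ ≤ (((m : ℝ) - 1) / 2) ^ p := by
  set B : ℝ := ((m : ℝ) - 1) / 2 with hB
  have hB0 : 0 ≤ B := by
    have : (1 : ℝ) ≤ (m : ℝ) := by exact_mod_cast hm
    rw [hB]; linarith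
  have hm0 : (0 : ℝ) < m := by exact_mod_cast Nat.lt_of_lt_of_le Nat.zero_lt_one hm
  rw [EuclideanSpace.norm_eq]
  have hterm : ∀ a : Fin m,
      ‖(WithLp.equiv 2 (Fin m → ℂ)).symm (vvec m p t) a‖ ^ 2
        ≤ (B ^ p * (Real.sqrt m)⁻¹) ^ 2 := by
    intro a
    have : ‖(WithLp.equiv 2 (Fin m → ℂ)).symm (vvec m p t) a‖
        = ‖freq m a‖ ^ p * (Real.sqrt m)⁻¹ := by
      show ‖vvec m p t a‖ = _
      rw [vvec, norm_mul, norm_pow, norm_steer]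
    rw [this]
    have h1 : ‖freq m a‖ ^ p ≤ B ^ p :=
      pow_le_pow_left₀ (norm_nonneg _) (norm_freq_le m hm a) p
    have h2 : (0 : ℝ) ≤ (Real.sqrt m)⁻¹ := by positivity
    have h3 : ‖freq m a‖ ^ p * (Real.sqrt m)⁻¹ ≤ B ^ p * (Real.sqrt m)⁻¹ :=
      mul_le_mul_of_nonneg_right h1 h2
    have h4 : (0 : ℝ) ≤ ‖freq m a‖ ^ p * (Real.sqrt m)⁻¹ := by positivity
    nlinarith
  have hsum : ∑ a : Fin m, ‖(WithLp.equiv 2 (Fin m → ℂ)).symm (vvec m p t) a‖ ^ 2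
      ≤ (B ^ p) ^ 2 := by
    calc ∑ a : Fin m, ‖(WithLp.equiv 2 (Fin m → ℂ)).symm (vvec m p t) a‖ ^ 2
        ≤ ∑ _a : Fin m, (B ^ p * (Real.sqrt m)⁻¹) ^ 2 :=
          Finset.sum_le_sum fun a _ => hterm a
      _ = (m : ℝ) * (B ^ p * (Real.sqrt m)⁻¹) ^ 2 := by
          rw [Finset.sum_const, Finset.card_univ, Fintype.card_fin, nsmul_eq_mul]
      _ = (B ^ p) ^ 2 * ((m : ℝ) * ((Real.sqrt m)⁻¹ * (Real.sqrt m)⁻¹)) := by ring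
      _ = (B ^ p) ^ 2 := by
          rw [← mul_inv, Real.mul_self_sqrt (le_of_lt hm0), mul_inv_cancel₀ (ne_of_gt hm0),
            mul_one]
  calc Real.sqrt (∑ a : Fin m, ‖(WithLp.equiv 2 (Fin m → ℂ)).symm (vvec m p t) a‖ ^ 2)
      ≤ Real.sqrt ((B ^ p) ^ 2) := Real.sqrt_le_sqrt hsum
    _ = B ^ p := Real.sqrt_sq (by positivity)

/-- Quadratic-form bound via the spectral norm. -/
lemma dot_bound (m : ℕ) (D : Matrix (Fin m) (Fin m) ℂ) (x y : Fin m → ℂ) :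
    ‖∑ a, (starRingEnd ℂ) (x a) * (D *ᵥ y) a‖
      ≤ specNorm D * (‖(WithLp.equiv 2 (Fin m → ℂ)).symm x‖
          * ‖(WithLp.equiv 2 (Fin m → ℂ)).symm y‖) := by
  set x' : EuclideanSpace ℂ (Fin m) := (WithLp.equiv 2 (Fin m → ℂ)).symm x with hx'
  set y' : EuclideanSpace ℂ (Fin m) := (WithLp.equiv 2 (Fin m → ℂ)).symm y with hy'
  have h1 : (∑ a, (starRingEnd ℂ) (x a) * (D *ᵥ y) a)
      = inner (𝕜 := ℂ) x' (Matrix.toEuclideanLin D y') := by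
    rw [Matrix.toEuclideanLin_apply]
    rw [PiLp.inner_apply]
    refine Finset.sum_congr rfl fun a _ => ?_
    simp [hx', hy', RCLike.inner_apply]
    ring
  rw [h1]
  have h2 : ‖Matrix.toEuclideanLin D y'‖ ≤ specNorm D * ‖y'‖ := by
    have := (LinearMap.toContinuousLinearMap (Matrix.toEuclideanLin D)).le_opNorm y'
    simpa [specNorm] using this
  calc ‖inner (𝕜 := ℂ) x' (Matrix.toEuclideanLin D y')‖
      ≤ ‖x'‖ * ‖Matrix.toEuclideanLin D y'‖ := norm_inner_le_norm _ _
    _ ≤ ‖x'‖ * (specNorm D * ‖y'‖) := by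
        exact mul_le_mul_of_nonneg_left h2 (norm_nonneg _)
    _ = specNorm D * (‖x'‖ * ‖y'‖) := by ring

lemma hasDerivAt_cexp_mul (c μ : ℂ) (t : ℝ) :
    HasDerivAt (fun u : ℝ => c * Complex.exp (μ * u)) (c * μ * Complex.exp (μ * t)) t := by
  have h1 : HasDerivAt (fun u : ℝ => (u : ℂ)) 1 t := Complex.ofRealCLM.hasDerivAt
  have h2 : HasDerivAt (fun u : ℝ => μ * (u : ℂ)) μ t := by
    simpa using h1.const_mul μ
  have h3 := h2.cexp
  have h4 := h3.const_mul c
  exact h4.congr_deriv (by ring)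

lemma contDiff_sum_cexp {ι : Type*} (s : Finset ι) (c μ : ι → ℂ) {n : WithTop ℕ∞} :
    ContDiff ℝ n (fun t : ℝ => ∑ i ∈ s, c i * Complex.exp (μ i * t)) := by
  apply ContDiff.sum
  intro i _
  apply ContDiff.mul contDiff_const
  exact Complex.contDiff_exp.comp (contDiff_const.mul Complex.ofRealCLM.contDiff)

lemma iteratedDeriv_sum_cexp {ι : Type*} (s : Finset ι) (c μ : ι → ℂ) (ℓ : ℕ) (t : ℝ) :
    iteratedDeriv ℓ (fun u : ℝ => ∑ i ∈ s, c i * Complex.exp (μ i * u)) t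
      = ∑ i ∈ s, c i * μ i ^ ℓ * Complex.exp (μ i * t) := by
  induction ℓ generalizing c with
  | zero => simp
  | succ n ih =>
    rw [iteratedDeriv_succ']
    have hderiv : (deriv fun u : ℝ => ∑ i ∈ s, c i * Complex.exp (μ i * u))
        = fun u : ℝ => ∑ i ∈ s, (c i * μ i) * Complex.exp (μ i * u) := by
      funext u
      exact (HasDerivAt.fun_sum fun i _ => hasDerivAt_cexp_mul (c i) (μ i) u).deriv
    rw [hderiv, ih (fun i => c i * μ i)]
    refine Finset.sum_congr rfl fun i _ => ?_
    rw [pow_succ]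
    ring

lemma iteratedDeriv_re_comp {f : ℝ → ℂ} (hf : ContDiff ℝ (⊤ : ℕ∞) f) (ℓ : ℕ) (t : ℝ) :
    iteratedDeriv ℓ (fun u => (f u).re) t = (iteratedDeriv ℓ f t).re := by
  have h := Complex.reCLM.iteratedFDeriv_comp_left (hf.contDiffAt (x := t))
    (i := ℓ) (by exact_mod_cast le_top)
  rw [iteratedDeriv_eq_iteratedFDeriv, iteratedDeriv_eq_iteratedFDeriv]
  have hfun : (fun u => (f u).re) = (⇑Complex.reCLM ∘ f) := rfl
  rw [hfun, h]
  rfl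

/-- The exponential-sum representation of the quadratic part of the landscape function. -/
def G (m : ℕ) (P : Matrix (Fin m) (Fin m) ℂ) (t : ℝ) : ℂ :=
  ∑ p : Fin m × Fin m, (P p.1 p.2 * ((m : ℂ))⁻¹)
    * Complex.exp ((freq m p.2 - freq m p.1) * t)

lemma landscape_eq {m s : ℕ} (W : Matrix (Fin m) (Fin s) ℂ) (t : ℝ) :
    landscape W t = 1 - (G m (W * Wᴴ) t).re := by
  unfold landscape
  congr 1
  set z : Fin s → ℂ := Wᴴ *ᵥ steer m t with hz
  have h1 : ∀ j, ‖z j‖ ^ 2 = ((starRingEnd ℂ) (z j) * z j).re := by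
    intro j
    rw [← Complex.normSq_eq_conj_mul_self, Complex.ofReal_re, ← Complex.sq_norm]
  rw [show (∑ j, ‖z j‖ ^ 2) = (∑ j, (starRingEnd ℂ) (z j) * z j).re by
    rw [Complex.re_sum]; exact Finset.sum_congr rfl fun j _ => h1 j]
  congr 1
  have h2 : (∑ j, (starRingEnd ℂ) (z j) * z j) = star z ⬝ᵥ z := by
    simp [dotProduct]
  rw [h2, hz, Matrix.star_mulVec, Matrix.conjTranspose_conjTranspose,
    Matrix.dotProduct_mulVec, Matrix.vecMul_vecMul]
  rw [G, Fintype.sum_prod_type]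
  simp only [Matrix.vecMul, dotProduct, Pi.star_apply, RCLike.star_def]
  rw [Finset.sum_comm]
  refine Finset.sum_congr rfl fun a _ => ?_
  rw [Finset.sum_mul]
  refine Finset.sum_congr rfl fun b _ => ?_
  calc (starRingEnd ℂ) (steer m t b) * (W * Wᴴ) b a * steer m t a
      = (W * Wᴴ) b a * ((starRingEnd ℂ) (steer m t b) * steer m t a) := by ring
    _ = (W * Wᴴ) b a * ((m : ℂ))⁻¹ * Complex.exp ((freq m a - freq m b) * t) := by
        rw [conj_steer_mul]
        ring

end LandscapeAux

/-- **Perturbation bound for landscape functions** (Lemma `lem:landscape2`).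
If `V, W ∈ ℂ^{m×s}` have orthonormal columns and `ϑ := ‖VV^* − WW^*‖₂` is their
sine-theta distance, then `‖q_V^{(ℓ)} − q_W^{(ℓ)}‖_{L^∞(𝕋)} ≤ ϑ m^ℓ` for every `ℓ ≥ 0`. -/
theorem landscape_perturbation (m s : ℕ) (hs : 1 ≤ s) (hm : s < m)
    (V W : Matrix (Fin m) (Fin s) ℂ) (hV : Vᴴ * V = 1) (hW : Wᴴ * W = 1)
    (θ : ℝ) (hθ : θ = specNorm (V * Vᴴ - W * Wᴴ)) :
    ∀ (ℓ : ℕ) (t : ℝ),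
      |iteratedDeriv ℓ (landscape V) t - iteratedDeriv ℓ (landscape W) t| ≤ θ * (m : ℝ) ^ ℓ := by
  intro ℓ t
  classical
  have hm1 : 1 ≤ m := le_of_lt (Nat.lt_of_le_of_lt hs hm)
  have hmR : (1 : ℝ) ≤ (m : ℝ) := by exact_mod_cast hm1
  set B : ℝ := ((m : ℝ) - 1) / 2 with hB
  have hB0 : 0 ≤ B := by rw [hB]; linarith
  set D : Matrix (Fin m) (Fin m) ℂ := W * Wᴴ - V * Vᴴ with hD
  have hθ0 : 0 ≤ θ := by rw [hθ]; exact norm_nonneg _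
  have hθD : specNorm D = θ := by
    rw [hθ, hD]
    unfold specNorm
    rw [show W * Wᴴ - V * Vᴴ = -(V * Vᴴ - W * Wᴴ) from (neg_sub _ _).symm]
    rw [map_neg, map_neg, norm_neg]
  -- smoothness
  have hGsmooth : ∀ P : Matrix (Fin m) (Fin m) ℂ,
      ContDiff ℝ (⊤ : ℕ∞) (LandscapeAux.G m P) := fun P =>
    LandscapeAux.contDiff_sum_cexp _ _ _
  have hre : ∀ P : Matrix (Fin m) (Fin m) ℂ,
      ContDiff ℝ (⊤ : ℕ∞) (fun u => (LandscapeAux.G m P u).re) := fun P =>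
    ContDiff.continuousLinearMap_comp Complex.reCLM (hGsmooth P)
  -- iterated derivative of each landscape function
  have hland : ∀ (U : Matrix (Fin m) (Fin s) ℂ),
      iteratedDeriv ℓ (landscape U) t
        = iteratedDeriv ℓ (fun _ : ℝ => (1 : ℝ)) t
          - (iteratedDeriv ℓ (LandscapeAux.G m (U * Uᴴ)) t).re := by
    intro U
    have hfun : landscape U
        = (fun _ : ℝ => (1 : ℝ)) - (fun u => (LandscapeAux.G m (U * Uᴴ) u).re) := by
      funext u
      rw [LandscapeAux.landscape_eq]
      rfl
    rw [hfun, ← iteratedDerivWithin_univ, ← iteratedDerivWithin_univ,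
      ← iteratedDerivWithin_univ,
      iteratedDerivWithin_sub (Set.mem_univ t) uniqueDiffOn_univ contDiffWithinAt_const
        (((hre (U * Uᴴ)).of_le (WithTop.coe_le_coe.mpr le_top)).contDiffWithinAt),
      iteratedDerivWithin_univ, iteratedDerivWithin_univ]
    congr 1
    rw [iteratedDerivWithin_univ]
    exact LandscapeAux.iteratedDeriv_re_comp (hGsmooth _) ℓ t
  -- the difference
  have hdiff : iteratedDeriv ℓ (landscape V) t - iteratedDeriv ℓ (landscape W) t
      = (iteratedDeriv ℓ (LandscapeAux.G m (W * Wᴴ)) t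
          - iteratedDeriv ℓ (LandscapeAux.G m (V * Vᴴ)) t).re := by
    rw [hland V, hland W, Complex.sub_re]
    ring
  -- compute the iterated derivatives of G
  have hG : ∀ P : Matrix (Fin m) (Fin m) ℂ,
      iteratedDeriv ℓ (LandscapeAux.G m P) t
        = ∑ p : Fin m × Fin m, (P p.1 p.2 * ((m : ℂ))⁻¹)
            * (LandscapeAux.freq m p.2 - LandscapeAux.freq m p.1) ^ ℓ
            * Complex.exp ((LandscapeAux.freq m p.2 - LandscapeAux.freq m p.1) * t) := by
    intro P
    exact LandscapeAux.iteratedDeriv_sum_cexp Finset.univ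
      (fun p : Fin m × Fin m => P p.1 p.2 * ((m : ℂ))⁻¹)
      (fun p : Fin m × Fin m => LandscapeAux.freq m p.2 - LandscapeAux.freq m p.1) ℓ t
  have hcomb : iteratedDeriv ℓ (LandscapeAux.G m (W * Wᴴ)) t
      - iteratedDeriv ℓ (LandscapeAux.G m (V * Vᴴ)) t
      = ∑ p : Fin m × Fin m, (D p.1 p.2 * ((m : ℂ))⁻¹)
          * (LandscapeAux.freq m p.2 - LandscapeAux.freq m p.1) ^ ℓ
          * Complex.exp ((LandscapeAux.freq m p.2 - LandscapeAux.freq m p.1) * t) := by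
    rw [hG, hG, ← Finset.sum_sub_distrib]
    refine Finset.sum_congr rfl fun p _ => ?_
    rw [hD, Matrix.sub_apply]
    ring
  -- binomial expansion and regrouping as quadratic forms
  set T : ℕ → ℂ := fun k => ∑ a, (starRingEnd ℂ) (LandscapeAux.vvec m (ℓ - k) t a)
      * (D *ᵥ LandscapeAux.vvec m k t) a with hT
  have hterm : ∀ a b : Fin m,
      (D a b * ((m : ℂ))⁻¹) * (LandscapeAux.freq m b - LandscapeAux.freq m a) ^ ℓ
          * Complex.exp ((LandscapeAux.freq m b - LandscapeAux.freq m a) * t)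
        = ∑ k ∈ Finset.range (ℓ + 1), ((Nat.choose ℓ k : ℂ)
            * ((starRingEnd ℂ) (LandscapeAux.vvec m (ℓ - k) t a)
              * (D a b * LandscapeAux.vvec m k t b))) := by
    intro a b
    have hpow : (LandscapeAux.freq m b - LandscapeAux.freq m a) ^ ℓ
        = ∑ k ∈ Finset.range (ℓ + 1), LandscapeAux.freq m b ^ k
            * (-LandscapeAux.freq m a) ^ (ℓ - k) * (Nat.choose ℓ k : ℂ) := by
      rw [sub_eq_add_neg, add_pow]
    calc (D a b * ((m : ℂ))⁻¹) * (LandscapeAux.freq m b - LandscapeAux.freq m a) ^ ℓ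
          * Complex.exp ((LandscapeAux.freq m b - LandscapeAux.freq m a) * t)
        = D a b * ((starRingEnd ℂ) (steer m t a) * steer m t b)
            * (LandscapeAux.freq m b - LandscapeAux.freq m a) ^ ℓ := by
          rw [LandscapeAux.conj_steer_mul]
          ring
      _ = ∑ k ∈ Finset.range (ℓ + 1), ((Nat.choose ℓ k : ℂ)
            * ((starRingEnd ℂ) (LandscapeAux.vvec m (ℓ - k) t a)
              * (D a b * LandscapeAux.vvec m k t b))) := by
          rw [hpow, Finset.mul_sum]
          refine Finset.sum_congr rfl fun k _ => ?_
          rw [LandscapeAux.conj_vvec]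
          simp only [LandscapeAux.vvec]
          ring
  have hexpand : (∑ p : Fin m × Fin m, (D p.1 p.2 * ((m : ℂ))⁻¹)
          * (LandscapeAux.freq m p.2 - LandscapeAux.freq m p.1) ^ ℓ
          * Complex.exp ((LandscapeAux.freq m p.2 - LandscapeAux.freq m p.1) * t))
      = ∑ k ∈ Finset.range (ℓ + 1), (Nat.choose ℓ k : ℂ) * T k := by
    rw [Fintype.sum_prod_type]
    calc (∑ a : Fin m, ∑ b : Fin m, (D a b * ((m : ℂ))⁻¹)
            * (LandscapeAux.freq m b - LandscapeAux.freq m a) ^ ℓ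
            * Complex.exp ((LandscapeAux.freq m b - LandscapeAux.freq m a) * t))
        = ∑ a : Fin m, ∑ b : Fin m, ∑ k ∈ Finset.range (ℓ + 1), ((Nat.choose ℓ k : ℂ)
            * ((starRingEnd ℂ) (LandscapeAux.vvec m (ℓ - k) t a)
              * (D a b * LandscapeAux.vvec m k t b))) :=
          Finset.sum_congr rfl fun a _ => Finset.sum_congr rfl fun b _ => hterm a b
      _ = ∑ k ∈ Finset.range (ℓ + 1), ∑ a : Fin m, ∑ b : Fin m, ((Nat.choose ℓ k : ℂ)
            * ((starRingEnd ℂ) (LandscapeAux.vvec m (ℓ - k) t a)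
              * (D a b * LandscapeAux.vvec m k t b))) := by
          rw [show (∑ a : Fin m, ∑ b : Fin m, ∑ k ∈ Finset.range (ℓ + 1),
              ((Nat.choose ℓ k : ℂ) * ((starRingEnd ℂ) (LandscapeAux.vvec m (ℓ - k) t a)
                * (D a b * LandscapeAux.vvec m k t b))))
              = ∑ a : Fin m, ∑ k ∈ Finset.range (ℓ + 1), ∑ b : Fin m,
              ((Nat.choose ℓ k : ℂ) * ((starRingEnd ℂ) (LandscapeAux.vvec m (ℓ - k) t a)
                * (D a b * LandscapeAux.vvec m k t b))) from
            Finset.sum_congr rfl fun a _ => Finset.sum_comm]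
          exact Finset.sum_comm
      _ = ∑ k ∈ Finset.range (ℓ + 1), (Nat.choose ℓ k : ℂ) * T k := by
          refine Finset.sum_congr rfl fun k _ => ?_
          rw [hT, Finset.mul_sum]
          refine Finset.sum_congr rfl fun a _ => ?_
          simp only [Matrix.mulVec, dotProduct]
          rw [← Finset.mul_sum, ← Finset.mul_sum]
  -- bound each quadratic form
  have hTbound : ∀ k ∈ Finset.range (ℓ + 1), ‖T k‖ ≤ θ * B ^ ℓ := by
    intro k hk
    have hkℓ : k ≤ ℓ := Nat.lt_succ_iff.mp (Finset.mem_range.mp hk)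
    have h1 := LandscapeAux.dot_bound m D (LandscapeAux.vvec m (ℓ - k) t)
      (LandscapeAux.vvec m k t)
    have h2 := LandscapeAux.norm_vvec_le m hm1 (ℓ - k) t
    have h3 := LandscapeAux.norm_vvec_le m hm1 k t
    have h4 : ‖(WithLp.equiv 2 (Fin m → ℂ)).symm (LandscapeAux.vvec m (ℓ - k) t)‖
          * ‖(WithLp.equiv 2 (Fin m → ℂ)).symm (LandscapeAux.vvec m k t)‖
        ≤ B ^ (ℓ - k) * B ^ k :=
      mul_le_mul h2 h3 (norm_nonneg _) (by positivity)
    have h5 : B ^ (ℓ - k) * B ^ k = B ^ ℓ := by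
      rw [← pow_add, Nat.sub_add_cancel hkℓ]
    calc ‖T k‖ ≤ specNorm D
          * (‖(WithLp.equiv 2 (Fin m → ℂ)).symm (LandscapeAux.vvec m (ℓ - k) t)‖
            * ‖(WithLp.equiv 2 (Fin m → ℂ)).symm (LandscapeAux.vvec m k t)‖) := h1
      _ ≤ specNorm D * (B ^ (ℓ - k) * B ^ k) :=
          mul_le_mul_of_nonneg_left h4 (norm_nonneg _)
      _ = θ * B ^ ℓ := by rw [hθD, h5]
  -- put everything together
  rw [hdiff, hcomb, hexpand]
  have hnorm : |(∑ k ∈ Finset.range (ℓ + 1), (Nat.choose ℓ k : ℂ) * T k).re|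
      ≤ θ * B ^ ℓ * 2 ^ ℓ := by
    calc |(∑ k ∈ Finset.range (ℓ + 1), (Nat.choose ℓ k : ℂ) * T k).re|
        ≤ ‖∑ k ∈ Finset.range (ℓ + 1), (Nat.choose ℓ k : ℂ) * T k‖ := by
          exact Complex.abs_re_le_norm _
      _ ≤ ∑ k ∈ Finset.range (ℓ + 1), ‖(Nat.choose ℓ k : ℂ) * T k‖ := norm_sum_le _ _
      _ = ∑ k ∈ Finset.range (ℓ + 1), (Nat.choose ℓ k : ℝ) * ‖T k‖ := by
          refine Finset.sum_congr rfl fun k _ => ?_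
          rw [norm_mul, Complex.norm_natCast]
      _ ≤ ∑ k ∈ Finset.range (ℓ + 1), (Nat.choose ℓ k : ℝ) * (θ * B ^ ℓ) :=
          Finset.sum_le_sum fun k hk =>
            mul_le_mul_of_nonneg_left (hTbound k hk) (Nat.cast_nonneg _)
      _ = (∑ k ∈ Finset.range (ℓ + 1), (Nat.choose ℓ k : ℝ)) * (θ * B ^ ℓ) := by
          rw [← Finset.sum_mul]
      _ = θ * B ^ ℓ * 2 ^ ℓ := by
          have : (∑ k ∈ Finset.range (ℓ + 1), (Nat.choose ℓ k : ℝ)) = 2 ^ ℓ := by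
            rw [← Nat.cast_sum, Nat.sum_range_choose]
            push_cast
            ring
          rw [this]
          ring
  refine le_trans hnorm ?_
  have h2B : θ * B ^ ℓ * 2 ^ ℓ = θ * ((m : ℝ) - 1) ^ ℓ := by
    rw [hB, mul_assoc, ← mul_pow]
    ring_nf
  rw [h2B]
  have : ((m : ℝ) - 1) ^ ℓ ≤ (m : ℝ) ^ ℓ :=
    pow_le_pow_left₀ (by linarith) (by linarith) ℓ
  exact mul_le_mul_of_nonneg_left this hθ0

end
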